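/- Let M be a nontrivial graph matroid family with dimensionality d and threshold t. Let G = G₁ ∪ G₂, where G₁ and G₂ are graphs with |V(G₁) ∩ V(G₂)| ≥ t. If G₁ and G₂ are both M-rigid, then so is G. -/

import Mathlib

/-!
Common framework: graph matroid families.

A finite simple graph (without isolated vertices) is identified with its edge
set: a finite set of non-diagonal elements of `Sym2 ℕ`.  A graph matroid
family is encoded, following the paper, as a finitary matroid on the edge set
of the countable complete graph on `ℕ` that is invariant under all
permutations of `ℕ`.
-/

/-- The set of vertices covered by a set of edges. -/
def eSupp (E : Set (Sym2 ℕ)) : Set ℕ := {v : ℕ | ∃ e ∈ E, v ∈ e}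

/-- The edge set of the complete graph on the vertex set `V`. -/
def clique (V : Set ℕ) : Set (Sym2 ℕ) := {e : Sym2 ℕ | ¬ e.IsDiag ∧ ∀ v ∈ e, v ∈ V}

/-- The edge set of the complete graph `K_n` on the vertices `0, …, n-1`. -/
def cliqueN (n : ℕ) : Set (Sym2 ℕ) := clique {v : ℕ | v < n}

/-- `E` is (the edge set of) a finite simple graph. -/
def IsGraph (E : Set (Sym2 ℕ)) : Prop := E.Finite ∧ ∀ e ∈ E, ¬ e.IsDiag

/-- The degree of the vertex `v` in the edge set `E`. -/
noncomputable def deg (E : Set (Sym2 ℕ)) (v : ℕ) : ℕ := {e ∈ E | v ∈ e}.ncard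

/-- The minimum degree of (the graph with) edge set `E` (whose vertex set is `eSupp E`). -/
noncomputable def minDeg (E : Set (Sym2 ℕ)) : ℕ := sInf {k : ℕ | ∃ v ∈ eSupp E, deg E v = k}

/-- Deleting a set `S` of vertices from the graph with edge set `E`. -/
def deleteVerts (E : Set (Sym2 ℕ)) (S : Set ℕ) : Set (Sym2 ℕ) := {e ∈ E | ∀ v ∈ e, v ∉ S}

/-- The graph with edge set `E` is `k`-connected: it has more than `k` vertices and
deleting any set of fewer than `k` vertices leaves a connected graph. -/
def KConnected (k : ℕ) (E : Set (Sym2 ℕ)) : Prop :=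
  k < (eSupp E).ncard ∧
  ∀ S : Finset ℕ, S.card < k →
    ((SimpleGraph.fromEdgeSet E).induce (eSupp E \ ↑S)).Connected

/-- `E` is a forest. -/
def IsForest (E : Set (Sym2 ℕ)) : Prop := (SimpleGraph.fromEdgeSet E).IsAcyclic

/-- `E` is a matching: no two distinct edges of `E` share a vertex. -/
def IsMatching (E : Set (Sym2 ℕ)) : Prop :=
  ∀ e ∈ E, ∀ f ∈ E, e ≠ f → ∀ v : ℕ, v ∈ e → v ∉ f

/-- `E` is a star `K_{1,m}` with `m` edges. -/
def IsStar (m : ℕ) (E : Set (Sym2 ℕ)) : Prop :=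
  ∃ (c : ℕ) (L : Finset ℕ), c ∉ L ∧ L.card = m ∧ E = (fun x => s(c, x)) '' ↑L

/-- `C` is a cycle graph `C_n` for some `n ≥ 3`. -/
def IsCycleGraph (C : Set (Sym2 ℕ)) : Prop :=
  ∃ n : ℕ, 3 ≤ n ∧ ∃ f : ZMod n → ℕ, Function.Injective f ∧
    C = {e : Sym2 ℕ | ∃ i : ZMod n, e = s(f i, f (i + 1))}

/-- The rank of the set `X` in the matroid `M₀`: the supremum of the cardinalities of
independent subsets of `X` (as a natural number; all sets we use are finite). -/
noncomputable def mrk (M₀ : Matroid (Sym2 ℕ)) (X : Set (Sym2 ℕ)) : ℕ :=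
  sSup {n : ℕ | ∃ I ⊆ X, M₀.Indep I ∧ I.ncard = n}

/-- A vertical `k`-separation of the matroid `M₀`. -/
def VerticalSep (M₀ : Matroid (Sym2 ℕ)) (k : ℕ) (E₁ E₂ : Set (Sym2 ℕ)) : Prop :=
  Disjoint E₁ E₂ ∧ E₁ ∪ E₂ = M₀.E ∧
  k ≤ mrk M₀ E₁ ∧ k ≤ mrk M₀ E₂ ∧
  mrk M₀ E₁ + mrk M₀ E₂ + 1 ≤ mrk M₀ M₀.E + k

/-- The matroid `M₀` is vertically `k`-connected. -/
def VerticallyConnected (M₀ : Matroid (Sym2 ℕ)) (k : ℕ) : Prop :=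
  k ≤ mrk M₀ M₀.E ∧
  ∀ k' : ℕ, 0 < k' → k' < k → ∀ E₁ E₂ : Set (Sym2 ℕ), ¬ VerticalSep M₀ k' E₁ E₂

/-- A `d`-dimensional abstract rigidity matroid on the complete graph with vertex set `V`. -/
def IsARM (d : ℕ) (V : Set ℕ) (M₀ : Matroid (Sym2 ℕ)) : Prop :=
  M₀.E = clique V ∧
  (∀ E₁ E₂ : Set (Sym2 ℕ), E₁ ⊆ clique V → E₂ ⊆ clique V →
      (eSupp E₁ ∩ eSupp E₂).ncard < d →
      M₀.closure (E₁ ∪ E₂) = M₀.closure E₁ ∪ M₀.closure E₂) ∧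
  (∀ E₁ E₂ : Set (Sym2 ℕ), E₁ ⊆ clique V → E₂ ⊆ clique V →
      d ≤ (eSupp E₁ ∩ eSupp E₂).ncard →
      M₀.closure E₁ = clique (eSupp E₁) → M₀.closure E₂ = clique (eSupp E₂) →
      M₀.closure (E₁ ∪ E₂) = clique (eSupp E₁ ∪ eSupp E₂))

/-- The `d`-dimensional edge split operation: replace an edge `uv` of `G` by a new
vertex `w` joined to `u` and `v`, as well as to `d - 1` other vertices of `G`. -/
def EdgeSplit (d : ℕ) (G G' : Set (Sym2 ℕ)) : Prop :=
  ∃ (u v w : ℕ) (X : Finset ℕ),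
    s(u, v) ∈ G ∧ w ∉ eSupp G ∧ ↑X ⊆ eSupp G ∧ X.card = d - 1 ∧ u ∉ X ∧ v ∉ X ∧
    G' = (G \ {s(u, v)}) ∪ {s(w, u), s(w, v)} ∪ ((fun x => s(w, x)) '' ↑X)

/-- A graph matroid family: a finitary matroid on the edge set of the countable
complete graph on `ℕ`, invariant under all permutations of `ℕ`. -/
structure GraphMatroidFamily where
  /-- The underlying matroid on the edge set of `K_ℕ`. -/
  M : Matroid (Sym2 ℕ)
  ground_eq : M.E = {e : Sym2 ℕ | ¬ e.IsDiag}
  finitary : M.Finitary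
  invariant : ∀ σ : Equiv.Perm ℕ, ∀ I : Set (Sym2 ℕ),
    M.Indep I → M.Indep (Sym2.map σ '' I)

namespace GraphMatroidFamily

variable (M : GraphMatroidFamily)

/-- The rank function of the family: `M.rk E` is the rank of the matroid `M(G)` for
any graph `G` whose edge set contains `E`. -/
noncomputable def rk (E : Set (Sym2 ℕ)) : ℕ := mrk M.M E

/-- A set of edges (a graph) is `M`-independent. -/
def Indep (E : Set (Sym2 ℕ)) : Prop := M.M.Indep E

/-- `C` is an `M`-circuit: a graph that is not `M`-independent, but such that deleting
any single edge from it yields an `M`-independent graph. -/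
def IsCircuit (C : Set (Sym2 ℕ)) : Prop :=
  IsGraph C ∧ ¬ M.Indep C ∧ ∀ e ∈ C, M.Indep (C \ {e})

/-- The graph with edge set `E` is `M`-rigid. -/
def Rigid (E : Set (Sym2 ℕ)) : Prop := M.rk E = M.rk (clique (eSupp E))

/-- The graph with vertex set `V` and edge set `E` is `M`-rigid. -/
def RigidOn (V : Set ℕ) (E : Set (Sym2 ℕ)) : Prop := M.rk E = M.rk (clique V)

/-- `M` is trivial if every (finite, simple) graph is `M`-independent. -/
def Trivial : Prop := ∀ E : Set (Sym2 ℕ), IsGraph E → M.Indep E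

/-- `M` is unbounded: the sequence `r(K_n)` is unbounded. -/
def Unbounded : Prop := ∀ B : ℕ, ∃ n : ℕ, B < M.rk (cliqueN n)

/-- `M` is bounded: the sequence `r(K_n)` is bounded. -/
def Bounded : Prop := ∃ B : ℕ, ∀ n : ℕ, M.rk (cliqueN n) ≤ B

/-- For a bounded family, `m` is the rank `r(M)` of `M`: the maximum (limit) of the
monotone sequence `r(K_n)`. -/
def HasRank (m : ℕ) : Prop :=
  (∀ n : ℕ, M.rk (cliqueN n) ≤ m) ∧ ∃ n : ℕ, M.rk (cliqueN n) = m

/-- `d` is the dimensionality of (the nontrivial family) `M`: the least `d` such that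
there is an `M`-circuit with minimum degree `d + 1`. -/
def IsDimensionality (d : ℕ) : Prop :=
  IsLeast {d : ℕ | ∃ C, M.IsCircuit C ∧ minDeg C = d + 1} d

/-- `t` is the threshold of (the nontrivial family) `M` with dimensionality `d`:
the least value of `|V(C)| - 1` over all `M`-circuits `C` with minimum degree `d + 1`. -/
def IsThreshold (d t : ℕ) : Prop :=
  IsLeast {t : ℕ | ∃ C, M.IsCircuit C ∧ minDeg C = d + 1 ∧ (eSupp C).ncard = t + 1} t

/-- `M` has the Lovász–Yemini property. -/
def LovaszYemini : Prop :=
  ∃ c : ℕ, ∀ E : Set (Sym2 ℕ), IsGraph E → KConnected c E → M.Rigid E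

/-- `ψ` is an isomorphism between the matroids `M(G)` and `M(H)`. -/
def MatroidIso (G H : Set (Sym2 ℕ)) (ψ : Sym2 ℕ → Sym2 ℕ) : Prop :=
  Set.BijOn ψ G H ∧ ∀ S ⊆ G, (M.Indep S ↔ M.Indep (ψ '' S))

/-- `G` is `M`-reconstructible: every isomorphism between `M(G)` and `M(H)` (for a graph
`H` without isolated vertices) is induced by a graph isomorphism. -/
def Reconstructible (G : Set (Sym2 ℕ)) : Prop :=
  ∀ H : Set (Sym2 ℕ), IsGraph H → ∀ ψ : Sym2 ℕ → Sym2 ℕ, M.MatroidIso G H ψ →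
    ∃ φ : ℕ → ℕ, Set.BijOn φ (eSupp G) (eSupp H) ∧ ∀ e ∈ G, ψ e = Sym2.map φ e

/-- `M` has the Whitney property. -/
def Whitney : Prop :=
  ∃ c : ℕ, ∀ E : Set (Sym2 ℕ), IsGraph E → KConnected c E → M.Reconstructible E

/-- `M` is the union of the graph matroid families `Ms`. -/
def IsUnionOf {k : ℕ} (Ms : Fin k → GraphMatroidFamily) : Prop :=
  ∀ I : Set (Sym2 ℕ),
    M.Indep I ↔ ∃ Is : Fin k → Set (Sym2 ℕ), (∀ i, (Ms i).Indep (Is i)) ∧ I = ⋃ i, Is i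

/-- `M` is a family of `d`-dimensional abstract rigidity matroids. -/
def FamilyOfARM (d : ℕ) : Prop :=
  ∀ n : ℕ, d ≤ n → IsARM d {v : ℕ | v < n} (M.M.restrict (cliqueN n))

/-- `M` is `1`-extendable: its dimensionality `d` is finite and positive, and the
`d`-dimensional edge split operation preserves `M`-independence. -/
def OneExtendable : Prop :=
  ∃ d : ℕ, 0 < d ∧ M.IsDimensionality d ∧
    ∀ G G' : Set (Sym2 ℕ), IsGraph G → M.Indep G → EdgeSplit d G G' → M.Indep G'

/-- `G` is `k`-vertex-redundantly `M`-rigid. -/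
def VertexRedundantlyRigid (k : ℕ) (G : Set (Sym2 ℕ)) : Prop :=
  M.Rigid G ∧ ∀ S : Finset ℕ, ↑S ⊆ eSupp G → S.card ≤ k →
    M.RigidOn (eSupp G \ ↑S) (deleteVerts G ↑S)

end GraphMatroidFamily

/-! `G` is rigid iff its edges span the clique on its vertices. With `Vᵢ = V(Gᵢ)`, edges
of `K_{V₁ ∪ V₂}` inside `V₁` or `V₂` are spanned by `G₁` or `G₂`. For a cross edge `xy`
with `x ∈ V₁ \ V₂`, `y ∈ V₂ \ V₁`, take a circuit `C` on `t + 1` vertices and relabel it by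
a permutation of `ℕ` so that one of its edges becomes `xy` and its other `t - 1` vertices
land in `V₁ ∩ V₂`. Every other edge of the relabelled circuit then lies in `K_{V₁}` or
`K_{V₂}`, and a circuit spans each of its edges. -/

open Set

lemma mem_clique {V : Set ℕ} {x y : ℕ} :
    s(x, y) ∈ clique V ↔ x ≠ y ∧ x ∈ V ∧ y ∈ V := by
  simp [clique, Sym2.mk_isDiag_iff]

lemma eSupp_union (G₁ G₂ : Set (Sym2 ℕ)) : eSupp (G₁ ∪ G₂) = eSupp G₁ ∪ eSupp G₂ := by
  ext v
  simp only [eSupp, mem_union, mem_ofPred_eq]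
  grind

lemma eSupp_finite {E : Set (Sym2 ℕ)} (hE : E.Finite) : (eSupp E).Finite := by
  refine (hE.biUnion fun e _ => e.toFinset.finite_toSet).subset ?_
  rintro v ⟨e, he, hv⟩
  exact mem_biUnion he (Sym2.mem_toFinset.mpr hv)

lemma clique_finite {V : Set ℕ} (hV : V.Finite) : (clique V).Finite := by
  refine ((hV.prod hV).image fun p => s(p.1, p.2)).subset ?_
  intro e he
  induction e using Sym2.ind with
  | _ a b =>
    obtain ⟨-, ha, hb⟩ := mem_clique.mp he
    exact ⟨(a, b), ⟨ha, hb⟩, rfl⟩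

lemma IsGraph.subset_clique {G : Set (Sym2 ℕ)} (hG : IsGraph G) : G ⊆ clique (eSupp G) :=
  fun e he => ⟨hG.2 e he, fun _ hv => ⟨e, he, hv⟩⟩

lemma IsGraph.union {G₁ G₂ : Set (Sym2 ℕ)} (h₁ : IsGraph G₁) (h₂ : IsGraph G₂) :
    IsGraph (G₁ ∪ G₂) :=
  ⟨h₁.1.union h₂.1, fun e he => he.elim (h₁.2 e) (h₂.2 e)⟩

lemma mk_mem_clique_union {V₁ V₂ : Set ℕ} {p q : ℕ} (hpq : p ≠ q) (hp : p ∈ V₁ ∩ V₂)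
    (hq : q ∈ V₁ ∪ V₂) : s(p, q) ∈ clique V₁ ∪ clique V₂ := by
  rcases hq with hq | hq
  · exact Or.inl (mem_clique.mpr ⟨hpq, hp.1, hq⟩)
  · exact Or.inr (mem_clique.mpr ⟨hpq, hp.2, hq⟩)

lemma clique_union_subset_closure {N : Matroid (Sym2 ℕ)} {V₁ V₂ : Set ℕ}
    (hE : clique V₁ ∪ clique V₂ ⊆ N.E)
    (hcross : ∀ x ∈ V₁ \ V₂, ∀ y ∈ V₂ \ V₁, s(x, y) ∈ N.closure (clique V₁ ∪ clique V₂)) :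
    clique (V₁ ∪ V₂) ⊆ N.closure (clique V₁ ∪ clique V₂) := by
  intro e he
  induction e using Sym2.ind with
  | _ a b =>
    obtain ⟨hab, ha, hb⟩ := mem_clique.mp he
    rw [mem_union] at ha hb
    by_cases hsame : (a ∈ V₁ ∧ b ∈ V₁) ∨ (a ∈ V₂ ∧ b ∈ V₂)
    · refine N.subset_closure _ hE ?_
      rcases hsame with ⟨ha', hb'⟩ | ⟨ha', hb'⟩
      exacts [Or.inl (mem_clique.mpr ⟨hab, ha', hb'⟩), Or.inr (mem_clique.mpr ⟨hab, ha', hb'⟩)]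
    · rcases ha with ha | ha
      · exact hcross a ⟨ha, by tauto⟩ b ⟨by tauto, by tauto⟩
      · rw [Sym2.eq_swap]
        exact hcross b ⟨by tauto, by tauto⟩ a ⟨ha, by tauto⟩

lemma Sym2.exists_mem_ne_ne_of_ne {α : Type*} {e : Sym2 α} {u v : α} (he : ¬ e.IsDiag)
    (hne : e ≠ s(u, v)) : ∃ a ∈ e, a ≠ u ∧ a ≠ v := by
  induction e using Sym2.ind with
  | _ a b =>
    by_contra! h
    simp only [Sym2.mem_iff, forall_eq_or_imp, forall_eq] at h
    obtain ⟨ha, hb⟩ := h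
    by_cases hau : a = u <;> by_cases hbu : b = u <;> simp_all [Sym2.eq_swap]

lemma Equiv.Perm.exists_extending_injOn {α : Type*} {T : Set α} (hT : T.Finite) {f : α → α}
    (hf : InjOn f T) : ∃ σ : Equiv.Perm α, ∀ z ∈ T, σ z = f z := by
  have := hT.to_subtype
  obtain ⟨σ, hσ⟩ := Equiv.Perm.exists_extending_pair ((↑) : T → α) (T.domRestrict f)
    Subtype.val_injective hf.injective
  exact ⟨σ, fun z hz => hσ ⟨z, hz⟩⟩

lemma Equiv.Perm.exists_apply_eq_apply_eq_mapsTo {α : Type*} {R S : Set α} (hR : R.Finite)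
    (hRS : R.encard ≤ S.encard) {u v x y : α} (hu : u ∉ R) (hv : v ∉ R) (huv : u ≠ v)
    (hxy : x ≠ y) (hx : x ∉ S) (hy : y ∉ S) :
    ∃ σ : Equiv.Perm α, σ u = x ∧ σ v = y ∧ MapsTo σ R S := by
  classical
  have : Nonempty α := ⟨u⟩
  obtain ⟨g, hgRS, hg⟩ := hR.exists_injOn_of_encard_le hRS
  set f := Function.update (Function.update g v y) u x
  have hfR : EqOn f g R := fun z hz => by
    simp [f, Function.update_of_ne (ne_of_mem_of_not_mem hz hu),
      Function.update_of_ne (ne_of_mem_of_not_mem hz hv)]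
  have hfv : f v = y := by simp [f, huv.symm]
  have hfRS : f '' R ⊆ S := hfR.image_eq.trans_subset (image_subset_iff.mpr hgRS)
  have hinj : InjOn f (insert u (insert v R)) := by
    rw [injOn_insert (by simp [huv, hu]), injOn_insert hv, image_insert_eq, hfv]
    refine ⟨⟨hg.congr hfR.symm, fun h => hy (hfRS h)⟩, ?_⟩
    simp only [f, Function.update_self, mem_insert_iff]
    exact fun h => h.elim hxy fun h => hx (hfRS ((hfR.image_eq).symm ▸ h))
  obtain ⟨σ, hσ⟩ := Equiv.Perm.exists_extending_injOn ((hR.insert v).insert u) hinj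
  refine ⟨σ, by simp [hσ, f], (hσ v (by simp)).trans hfv, fun z hz => ?_⟩
  rw [hσ z (by simp [hz]), hfR hz]
  exact hgRS hz

lemma mrk_eq_eRk {N : Matroid (Sym2 ℕ)} {X : Set (Sym2 ℕ)} (hX : X.Finite) :
    (mrk N X : ℕ∞) = N.eRk X := by
  obtain ⟨I, hI⟩ := N.exists_isBasis' X
  have hIfin : I.Finite := hX.subset hI.subset
  have hmax : ∀ n ∈ {n | ∃ J ⊆ X, N.Indep J ∧ J.ncard = n}, n ≤ I.ncard := by
    rintro n ⟨J, hJX, hJ, rfl⟩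
    have := hJ.encard_le_eRk_of_subset hJX
    rwa [← hI.encard_eq_eRk, ← (hX.subset hJX).cast_ncard_eq, ← hIfin.cast_ncard_eq,
      Nat.cast_le] at this
  rw [← hI.encard_eq_eRk, ← hIfin.cast_ncard_eq, Nat.cast_inj]
  exact IsGreatest.csSup_eq ⟨⟨I, hI.subset, hI.indep, rfl⟩, hmax⟩

namespace GraphMatroidFamily

variable {M : GraphMatroidFamily}

lemma clique_subset_ground (M : GraphMatroidFamily) (V : Set ℕ) : clique V ⊆ M.M.E :=
  fun _ he => M.ground_eq ▸ he.1

lemma subset_ground_of_isGraph (M : GraphMatroidFamily) {G : Set (Sym2 ℕ)} (hG : IsGraph G) :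
    G ⊆ M.M.E :=
  hG.subset_clique.trans (M.clique_subset_ground _)

lemma rigid_iff_clique_subset_closure {G : Set (Sym2 ℕ)} (hG : IsGraph G) :
    M.Rigid G ↔ clique (eSupp G) ⊆ M.M.closure G := by
  have hGK := hG.subset_clique
  rw [Rigid, rk, rk, ← Nat.cast_inj (R := ℕ∞), mrk_eq_eRk hG.1,
    mrk_eq_eRk (clique_finite (eSupp_finite hG.1))]
  constructor
  · intro h
    rw [(M.M.isRkFinite_of_finite hG.1).closure_eq_closure_of_subset_of_eRk_ge_eRk hGK h.ge]
    exact M.M.subset_closure _ (M.clique_subset_ground _)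
  · intro h
    exact le_antisymm (M.M.eRk_mono hGK) ((M.M.eRk_mono h).trans (M.M.eRk_closure_eq G).le)

lemma indep_map_perm_iff (σ : Equiv.Perm ℕ) {I : Set (Sym2 ℕ)} :
    M.Indep (Sym2.map σ '' I) ↔ M.Indep I := by
  refine ⟨fun h => ?_, M.invariant σ I⟩
  simpa [Indep, image_image, Sym2.map_map] using M.invariant σ⁻¹ _ h

lemma IsCircuit.map {C : Set (Sym2 ℕ)} (hC : M.IsCircuit C) (σ : Equiv.Perm ℕ) :
    M.IsCircuit (Sym2.map σ '' C) := by
  refine ⟨⟨hC.1.1.image _, ?_⟩, (indep_map_perm_iff σ).not.mpr hC.2.1, ?_⟩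
  · rintro _ ⟨e, he, rfl⟩
    rw [Sym2.isDiag_map σ.injective]
    exact hC.1.2 e he
  · rintro _ ⟨e, he, rfl⟩
    rw [← image_singleton, ← image_sdiff (Sym2.map.injective σ.injective), indep_map_perm_iff]
    exact hC.2.2 e he

lemma IsCircuit.mem_closure_sdiff_singleton {C : Set (Sym2 ℕ)} (hC : M.IsCircuit C)
    {e : Sym2 ℕ} (he : e ∈ C) : e ∈ M.M.closure (C \ {e}) := by
  rw [Matroid.Indep.mem_closure_iff (hC.2.2 e he), insert_sdiff_singleton, insert_eq_of_mem he]
  exact Or.inl ⟨hC.2.1, M.subset_ground_of_isGraph hC.1⟩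

lemma IsCircuit.mk_mem_closure_clique_union {C : Set (Sym2 ℕ)} (hC : M.IsCircuit C)
    {V₁ V₂ : Set ℕ} (hcard : (eSupp C).encard ≤ (V₁ ∩ V₂).encard + 1) {x y : ℕ}
    (hx : x ∈ V₁ \ V₂) (hy : y ∈ V₂ \ V₁) :
    s(x, y) ∈ M.M.closure (clique V₁ ∪ clique V₂) := by
  obtain ⟨e₀, he₀⟩ : C.Nonempty :=
    nonempty_iff_ne_empty.mpr fun h => hC.2.1 (h ▸ M.M.empty_indep)
  induction e₀ using Sym2.ind with | _ u v => ?_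
  have huv : u ≠ v := fun h => hC.1.2 _ he₀ (Sym2.mk_isDiag_iff.mpr h)
  have hu : u ∈ eSupp C := ⟨_, he₀, Sym2.mem_mk_left u v⟩
  set R := eSupp C \ {u, v}
  have hRS : R.encard ≤ (V₁ ∩ V₂).encard := by
    rw [← encard_sdiff_singleton_add_one hu] at hcard
    calc R.encard ≤ (eSupp C \ {u}).encard :=
          encard_le_encard (sdiff_subset_sdiff_right (by simp))
      _ ≤ (V₁ ∩ V₂).encard := (ENat.add_le_add_iff_right ENat.one_ne_top).mp hcard
  obtain ⟨σ, hσu, hσv, hσR⟩ := Equiv.Perm.exists_apply_eq_apply_eq_mapsTo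
    (eSupp_finite hC.1.1).sdiff hRS (by simp) (by simp) huv
    (ne_of_mem_of_not_mem hx.1 hy.2) (fun h => hx.2 h.2) (fun h => hy.2 h.1)
  have hσC : MapsTo σ (eSupp C) (V₁ ∪ V₂) := by
    intro z hz
    by_cases hzu : z = u
    · exact Or.inl (hzu ▸ hσu ▸ hx.1)
    by_cases hzv : z = v
    · exact Or.inr (hzv ▸ hσv ▸ hy.1)
    exact Or.inl (hσR ⟨hz, by simp [hzu, hzv]⟩).1
  have hmap : Sym2.map σ s(u, v) = s(x, y) := by simp [hσu, hσv]
  have hspan := (hC.map σ).mem_closure_sdiff_singleton (mem_image_of_mem _ he₀)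
  rw [← image_singleton (f := Sym2.map σ), ← image_sdiff (Sym2.map.injective σ.injective), hmap]
    at hspan
  refine M.M.closure_subset_closure ?_ hspan
  rintro _ ⟨e, ⟨heC, hne⟩, rfl⟩
  obtain ⟨a, hae, hau, hav⟩ := Sym2.exists_mem_ne_ne_of_ne (hC.1.2 e heC) hne
  obtain ⟨b, rfl⟩ := Sym2.mem_iff_exists.mp hae
  rw [Sym2.map_mk]
  exact mk_mem_clique_union (σ.injective.ne fun h => hC.1.2 _ heC (Sym2.mk_isDiag_iff.mpr h))
    (hσR ⟨⟨_, heC, hae⟩, by simp [hau, hav]⟩) (hσC ⟨_, heC, Sym2.mem_mk_right a b⟩)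

end GraphMatroidFamily

theorem gluing_general (M : GraphMatroidFamily) (d t : ℕ)
    (ht : M.IsThreshold d t)
    (G₁ G₂ : Set (Sym2 ℕ)) (h₁ : IsGraph G₁) (h₂ : IsGraph G₂)
    (hcap : t ≤ (eSupp G₁ ∩ eSupp G₂).ncard)
    (hr₁ : M.Rigid G₁) (hr₂ : M.Rigid G₂) : M.Rigid (G₁ ∪ G₂) := by
  obtain ⟨C, hC, -, hCt⟩ := ht.1
  have hcard : (eSupp C).encard ≤ (eSupp G₁ ∩ eSupp G₂).encard + 1 := by
    rw [← (eSupp_finite hC.1.1).cast_ncard_eq, hCt,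
      ← ((eSupp_finite h₁.1).inter_of_left _).cast_ncard_eq]
    exact_mod_cast Nat.add_le_add_right hcap 1
  rw [M.rigid_iff_clique_subset_closure h₁] at hr₁
  rw [M.rigid_iff_clique_subset_closure h₂] at hr₂
  rw [M.rigid_iff_clique_subset_closure (h₁.union h₂), eSupp_union]
  have hcliques : clique (eSupp G₁) ∪ clique (eSupp G₂) ⊆ M.M.closure (G₁ ∪ G₂) :=
    union_subset (hr₁.trans (M.M.closure_subset_closure subset_union_left))
      (hr₂.trans (M.M.closure_subset_closure subset_union_right))
  calc clique (eSupp G₁ ∪ eSupp G₂)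
      ⊆ M.M.closure (clique (eSupp G₁) ∪ clique (eSupp G₂)) :=
        clique_union_subset_closure
          (union_subset (M.clique_subset_ground _) (M.clique_subset_ground _))
          fun _ hx _ hy => hC.mk_mem_closure_clique_union hcard hx hy
    _ ⊆ M.M.closure (G₁ ∪ G₂) := M.M.closure_subset_closure_of_subset_closure hcliques

/-- (Gluing lemma.) Let `M` be a nontrivial graph matroid family with
dimensionality `d` and threshold `t`.  If `G₁` and `G₂` are `M`-rigid graphs with at
least `t` vertices in common, then their union is `M`-rigid. -/
theorem gluing (M : GraphMatroidFamily) (d t : ℕ)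
    (hnt : ¬ M.Trivial) (hd : M.IsDimensionality d) (ht : M.IsThreshold d t)
    (G₁ G₂ : Set (Sym2 ℕ)) (h₁ : IsGraph G₁) (h₂ : IsGraph G₂)
    (hcap : t ≤ (eSupp G₁ ∩ eSupp G₂).ncard)
    (hr₁ : M.Rigid G₁) (hr₂ : M.Rigid G₂) : M.Rigid (G₁ ∪ G₂) :=
  gluing_general M d t ht G₁ G₂ h₁ h₂ hcap hr₁ hr₂
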